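/- Assume there exist c > 0 and 0 < t₁ < t₂ ≤ 1 such that f(ar) ≥ c for almost every r ∈ [t₁,t₂]. Let (d_k)_{k≥1} be a sequence of positive reals such that for every ε ∈ (0,1) there exists K with w₋((1+ε)k) ≤ d_k ≤ w₊((1−ε)k) for all k > K. Then ln d_k = −2k ln k + o(k ln k) as k → ∞, i.e. lim_{k→∞} (ln d_k)/(k ln k) = −2. -/

import Mathlib

open Filter Topology MeasureTheory

/-- `f_t = ∫₀¹ f(ar) r^{t-3} dr`. -/
noncomputable def fT (a : ℝ) (f : ℝ → ℝ) (t : ℝ) : ℝ :=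
  ∫ r in (0:ℝ)..1, f (a * r) * r ^ (t - 3)

/-- `w₋(t) = t⁴ · f_t² · (aκe/t)^{2t}`. -/
noncomputable def wMinus (a κ : ℝ) (f : ℝ → ℝ) (t : ℝ) : ℝ :=
  t ^ (4 : ℝ) * (fT a f t) ^ 2 * (a * κ * Real.exp 1 / t) ^ (2 * t)

/-- `w₊(t) = t⁸ · f_t² · (aκe/t)^{2t}`. -/
noncomputable def wPlus (a κ : ℝ) (f : ℝ → ℝ) (t : ℝ) : ℝ :=
  t ^ (8 : ℝ) * (fT a f t) ^ 2 * (a * κ * Real.exp 1 / t) ^ (2 * t)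

/-! For `t ≥ 3` the integral `f_t` lies between `c (t₂ - t₁) t₁^(t-3)` and `1`, so `log f_t = O(t)`.
Hence `log w±(s k) = -2 s k log k + O(k)` for every fixed `s > 0`, so `ln d_k / (k ln k)` is
eventually squeezed between quantities tending to `-2(1 + ε)` and `-2(1 - ε)`; letting `ε → 0`
gives `-2`. -/

open Asymptotics Real Set

theorem tendsto_of_forall_eventually_le_le {α ι β : Type*} [LinearOrder β] [TopologicalSpace β]
    [OrderTopology β] {l : Filter α} {p : Filter ι} [p.NeBot] {x : α → β} {L : β}
    {lo hi : ι → α → β} {A B : ι → β} (hA : Tendsto A p (𝓝 L)) (hB : Tendsto B p (𝓝 L))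
    (hlo : ∀ᶠ ε in p, Tendsto (lo ε) l (𝓝 (A ε)))
    (hhi : ∀ᶠ ε in p, Tendsto (hi ε) l (𝓝 (B ε)))
    (hx : ∀ᶠ ε in p, ∀ᶠ k in l, lo ε k ≤ x k ∧ x k ≤ hi ε k) :
    Tendsto x l (𝓝 L) := by
  refine tendsto_order.2 ⟨fun m hm => ?_, fun m hm => ?_⟩
  · obtain ⟨ε, hAε, hloε, hxε⟩ := ((hA.eventually (eventually_gt_nhds hm)).and (hlo.and hx)).exists
    filter_upwards [hloε.eventually (eventually_gt_nhds hAε), hxε] with k hk hxk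
    exact hk.trans_le hxk.1
  · obtain ⟨ε, hBε, hhiε, hxε⟩ := ((hB.eventually (eventually_lt_nhds hm)).and (hhi.and hx)).exists
    filter_upwards [hhiε.eventually (eventually_lt_nhds hBε), hxε] with k hk hxk
    exact hxk.2.trans_lt hk

theorem tendsto_div_mul_log_of_isBigO {g : ℕ → ℝ} {L : ℝ}
    (h : (fun k : ℕ => g k - L * (k * log k)) =O[atTop] (fun k : ℕ => (k : ℝ))) :
    Tendsto (fun k : ℕ => g k / (k * log k)) atTop (𝓝 L) := by
  have hklog : (fun k : ℕ => (k : ℝ)) =o[atTop] (fun k : ℕ => (k : ℝ) * log k) := by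
    simpa using (isBigO_refl (fun k : ℕ => (k : ℝ)) atTop).mul_isLittleO
      (isLittleO_const_log_atTop (c := 1)).natCast_atTop
  have hquot := ((h.trans_isLittleO hklog).tendsto_div_nhds_zero).add_const L
  rw [zero_add] at hquot
  refine hquot.congr' ?_
  filter_upwards [eventually_gt_atTop 1] with k hk
  have hk0 : (k : ℝ) ≠ 0 := by positivity
  have hlogk : log k ≠ 0 := (log_pos (by exact_mod_cast hk)).ne'
  field_simp
  ring

theorem isBigO_log_weight {p b s : ℝ} (hb : 0 < b) (hs : 0 < s) {F : ℝ → ℝ}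
    (hF : ∀ᶠ t in atTop, 0 < F t) (hlogF : (fun t => log (F t)) =O[atTop] id) :
    (fun k : ℕ => log ((s * k) ^ p * F (s * k) ^ 2 * (b / (s * k)) ^ (2 * (s * k)))
      - (-2 * s) * (k * log k)) =O[atTop] (fun k : ℕ => (k : ℝ)) := by
  have hsk : Tendsto (fun k : ℕ => s * k) atTop atTop :=
    tendsto_natCast_atTop_atTop.const_mul_atTop hs
  have hlin : (fun k : ℕ => s * (k : ℝ)) =O[atTop] (fun k : ℕ => (k : ℝ)) :=
    isBigO_const_mul_self _ _ _
  have hlog : (fun k : ℕ => log (s * k)) =O[atTop] (fun k : ℕ => (k : ℝ)) :=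
    (isLittleO_log_id_atTop.isBigO.comp_tendsto hsk).trans hlin
  have hlogF' : (fun k : ℕ => log (F (s * k))) =O[atTop] (fun k : ℕ => (k : ℝ)) :=
    (hlogF.comp_tendsto hsk).trans hlin
  -- `log w(sk) + 2sk log k = p log (sk) + 2 log F(sk) + 2 (log b - log s) sk`
  refine (((hlog.const_mul_left p).add (hlogF'.const_mul_left 2)).add
    (hlin.const_mul_left (2 * (log b - log s)))).congr' ?_ EventuallyEq.rfl
  filter_upwards [hsk.eventually hF, eventually_gt_atTop 0] with k hFk hk₀
  have hk : (0 : ℝ) < k := by exact_mod_cast hk₀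
  have hskpos : 0 < s * k := by positivity
  symm
  rw [log_mul (by positivity) (by positivity), log_mul (by positivity) (by positivity),
    log_rpow hskpos, log_pow, log_rpow (by positivity), log_div hb.ne' hskpos.ne',
    log_mul hs.ne' hk.ne']
  ring

section fT

variable {a : ℝ} {f : ℝ → ℝ} {t : ℝ}

theorem fT_integrand_mem_Icc (ha : 0 ≤ a) (hf01 : ∀ r ∈ Icc (0 : ℝ) a, f r ∈ Icc (0 : ℝ) 1)
    (ht : 3 ≤ t) {r : ℝ} (hr : r ∈ Icc (0 : ℝ) 1) : f (a * r) * r ^ (t - 3) ∈ Icc (0 : ℝ) 1 := by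
  have hfr := hf01 (a * r) ⟨mul_nonneg ha hr.1, mul_le_of_le_one_right ha hr.2⟩
  have hpow_nonneg : 0 ≤ r ^ (t - 3) := rpow_nonneg hr.1 _
  exact ⟨mul_nonneg hfr.1 hpow_nonneg,
    mul_le_one₀ hfr.2 hpow_nonneg (rpow_le_one hr.1 hr.2 (by linarith))⟩

theorem fT_le_one (ha : 0 ≤ a) (hf01 : ∀ r ∈ Icc (0 : ℝ) a, f r ∈ Icc (0 : ℝ) 1) (ht : 3 ≤ t) :
    fT a f t ≤ 1 := by
  have hbound : ∀ r ∈ uIoc (0 : ℝ) 1, ‖f (a * r) * r ^ (t - 3)‖ ≤ 1 := fun r hr => by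
    rw [uIoc_of_le zero_le_one] at hr
    have h := fT_integrand_mem_Icc ha hf01 ht (Ioc_subset_Icc_self hr)
    exact (norm_of_nonneg h.1).trans_le h.2
  have hnorm := intervalIntegral.norm_integral_le_of_norm_le_const hbound
  rw [sub_zero, abs_one, mul_one] at hnorm
  exact (le_abs_self _).trans hnorm

theorem intervalIntegrable_fT_integrand (ha : 0 ≤ a) (hf : Measurable f)
    (hf01 : ∀ r ∈ Icc (0 : ℝ) a, f r ∈ Icc (0 : ℝ) 1) (ht : 3 ≤ t) :
    IntervalIntegrable (fun r => f (a * r) * r ^ (t - 3)) volume 0 1 := by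
  rw [intervalIntegrable_iff_integrableOn_Icc_of_le zero_le_one]
  refine Measure.integrableOn_of_bounded (M := 1) measure_Icc_lt_top.ne
    (by fun_prop) ((ae_restrict_iff' measurableSet_Icc).2 (.of_forall fun r hr => ?_))
  have h := fT_integrand_mem_Icc ha hf01 ht hr
  exact (norm_of_nonneg h.1).trans_le h.2

theorem le_fT (ha : 0 ≤ a) (hf : Measurable f) (hf01 : ∀ r ∈ Icc (0 : ℝ) a, f r ∈ Icc (0 : ℝ) 1)
    {c t₁ t₂ : ℝ} (ht₁ : 0 ≤ t₁) (ht₁₂ : t₁ ≤ t₂) (ht₂ : t₂ ≤ 1)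
    (hlower : ∀ᵐ r ∂(volume : Measure ℝ), r ∈ Icc t₁ t₂ → c ≤ f (a * r)) (ht : 3 ≤ t) :
    c * (t₂ - t₁) * t₁ ^ (t - 3) ≤ fT a f t := by
  have hint := intervalIntegrable_fT_integrand ha hf hf01 ht
  have hint₁₂ : IntervalIntegrable (fun r => f (a * r) * r ^ (t - 3)) volume t₁ t₂ :=
    hint.mono_set (uIcc_subset_uIcc (by simp [ht₁, ht₁₂.trans ht₂]) (by simp [ht₁.trans ht₁₂, ht₂]))
  have hmid : (fun _ => c * t₁ ^ (t - 3)) ≤ᵐ[volume.restrict (Icc t₁ t₂)]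
      fun r => f (a * r) * r ^ (t - 3) := by
    rw [EventuallyLE, ae_restrict_iff' measurableSet_Icc]
    filter_upwards [hlower] with r hr hmem
    have hr01 : r ∈ Icc (0 : ℝ) 1 := ⟨ht₁.trans hmem.1, hmem.2.trans ht₂⟩
    exact mul_le_mul (hr hmem) (rpow_le_rpow ht₁ hmem.1 (by linarith)) (rpow_nonneg ht₁ _)
      (hf01 _ ⟨mul_nonneg ha hr01.1, mul_le_of_le_one_right ha hr01.2⟩).1
  have hnonneg : 0 ≤ᵐ[volume.restrict (Ioc 0 1)] fun r => f (a * r) * r ^ (t - 3) :=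
    (ae_restrict_iff' measurableSet_Ioc).2 (.of_forall fun r hr =>
      (fT_integrand_mem_Icc ha hf01 ht (Ioc_subset_Icc_self hr)).1)
  calc c * (t₂ - t₁) * t₁ ^ (t - 3) = ∫ _ in t₁..t₂, c * t₁ ^ (t - 3) := by simp; ring
    _ ≤ ∫ r in t₁..t₂, f (a * r) * r ^ (t - 3) :=
      intervalIntegral.integral_mono_ae_restrict ht₁₂ intervalIntegrable_const hint₁₂ hmid
    _ ≤ fT a f t := intervalIntegral.integral_mono_interval ht₁ ht₁₂ ht₂ hnonneg hint

variable {c t₁ t₂ : ℝ}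

theorem fT_pos (ha : 0 ≤ a) (hf : Measurable f) (hf01 : ∀ r ∈ Icc (0 : ℝ) a, f r ∈ Icc (0 : ℝ) 1)
    (hc : 0 < c) (ht₁ : 0 < t₁) (ht₁₂ : t₁ < t₂) (ht₂ : t₂ ≤ 1)
    (hlower : ∀ᵐ r ∂(volume : Measure ℝ), r ∈ Icc t₁ t₂ → c ≤ f (a * r)) (ht : 3 ≤ t) :
    0 < fT a f t := by
  have := sub_pos.2 ht₁₂
  exact lt_of_lt_of_le (by positivity) (le_fT ha hf hf01 ht₁.le ht₁₂.le ht₂ hlower ht)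

theorem isBigO_log_fT (ha : 0 ≤ a) (hf : Measurable f)
    (hf01 : ∀ r ∈ Icc (0 : ℝ) a, f r ∈ Icc (0 : ℝ) 1)
    (hc : 0 < c) (ht₁ : 0 < t₁) (ht₁₂ : t₁ < t₂) (ht₂ : t₂ ≤ 1)
    (hlower : ∀ᵐ r ∂(volume : Measure ℝ), r ∈ Icc t₁ t₂ → c ≤ f (a * r)) :
    (fun t => log (fT a f t)) =O[atTop] id := by
  have hC : 0 < c * (t₂ - t₁) := mul_pos hc (sub_pos.2 ht₁₂)
  set C := log (c * (t₂ - t₁))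
  have hlin : (fun t => (C - 3 * log t₁) + log t₁ * id t) =O[atTop] id :=
    (isLittleO_const_id_atTop _).isBigO.add (isBigO_const_mul_self _ _ _)
  refine (IsBigO.of_bound' ?_).trans hlin
  filter_upwards [eventually_ge_atTop 3] with t ht
  have hpos := fT_pos ha hf hf01 hc ht₁ ht₁₂ ht₂ hlower ht
  have hlow : C + (t - 3) * log t₁ ≤ log (fT a f t) := by
    have h := log_le_log (mul_pos hC (rpow_pos_of_pos ht₁ _))
      (le_fT ha hf hf01 ht₁.le ht₁₂.le ht₂ hlower ht)
    rwa [log_mul hC.ne' (rpow_pos_of_pos ht₁ _).ne', log_rpow ht₁] at h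
  have hup : log (fT a f t) ≤ 0 := log_nonpos hpos.le (fT_le_one ha hf01 ht)
  rw [norm_of_nonpos hup, Real.norm_eq_abs, id]
  calc -log (fT a f t) ≤ -(C - 3 * log t₁ + log t₁ * t) := by linarith
    _ ≤ |C - 3 * log t₁ + log t₁ * t| := neg_le_abs _

end fT

theorem wMinus_pos {a κ t : ℝ} {f : ℝ → ℝ} (ha : 0 < a) (hκ : 0 < κ) (ht : 0 < t)
    (hfT : 0 < fT a f t) : 0 < wMinus a κ f t := by
  unfold wMinus
  have := pow_pos hfT 2
  positivity

theorem stmt10_general (a κ : ℝ) (ha : 0 < a) (hκ : 0 < κ)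
    (f : ℝ → ℝ) (hf : Measurable f)
    (hf01 : ∀ r ∈ Set.Icc (0 : ℝ) a, f r ∈ Set.Icc (0 : ℝ) 1)
    (c t₁ t₂ : ℝ) (hc : 0 < c) (ht₁ : 0 < t₁) (ht₁₂ : t₁ < t₂) (ht₂ : t₂ ≤ 1)
    (hlower : ∀ᵐ r ∂(volume : Measure ℝ), r ∈ Set.Icc t₁ t₂ → c ≤ f (a * r))
    (d : ℕ → ℝ)
    (hsq : ∀ ε ∈ Set.Ioo (0 : ℝ) 1, ∃ K : ℕ, ∀ k : ℕ, K < k →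
      wMinus a κ f ((1 + ε) * k) ≤ d k ∧ d k ≤ wPlus a κ f ((1 - ε) * k)) :
    Tendsto (fun k : ℕ => Real.log (d k) / (k * Real.log k)) atTop (𝓝 (-2)) := by
  have hb : 0 < a * κ * exp 1 := by positivity
  have hF : ∀ᶠ t in atTop, 0 < fT a f t := (eventually_ge_atTop 3).mono fun _ =>
    fT_pos ha.le hf hf01 hc ht₁ ht₁₂ ht₂ hlower
  have hlogF := isBigO_log_fT ha.le hf hf01 hc ht₁ ht₁₂ ht₂ hlower
  have hε : ∀ᶠ ε in 𝓝[>] (0 : ℝ), ε ∈ Ioo 0 1 := Ioo_mem_nhdsGT one_pos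
  refine tendsto_of_forall_eventually_le_le (p := 𝓝[>] 0)
    (lo := fun ε k => log (wMinus a κ f ((1 + ε) * k)) / (k * log k))
    (hi := fun ε k => log (wPlus a κ f ((1 - ε) * k)) / (k * log k))
    (A := fun ε => -2 * (1 + ε)) (B := fun ε => -2 * (1 - ε))
    (tendsto_nhdsWithin_of_tendsto_nhds (Continuous.tendsto' (by fun_prop) 0 _ (by ring)))
    (tendsto_nhdsWithin_of_tendsto_nhds (Continuous.tendsto' (by fun_prop) 0 _ (by ring)))
    ?_ ?_ ?_
  · filter_upwards [hε] with ε hε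
    exact tendsto_div_mul_log_of_isBigO (isBigO_log_weight hb (by linarith [hε.1]) hF hlogF)
  · filter_upwards [hε] with ε hε
    exact tendsto_div_mul_log_of_isBigO (isBigO_log_weight hb (by linarith [hε.2]) hF hlogF)
  · filter_upwards [hε] with ε hε
    obtain ⟨K, hK⟩ := hsq ε hε
    filter_upwards [eventually_gt_atTop K, eventually_gt_atTop 1,
      (tendsto_natCast_atTop_atTop.const_mul_atTop
        (show (0 : ℝ) < 1 + ε by linarith [hε.1])).eventually hF]
      with k hKk hk hFk
    have hk' : (1 : ℝ) < k := by exact_mod_cast hk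
    have hden : 0 < (k : ℝ) * log k := mul_pos (by linarith) (log_pos hk')
    have hw := wMinus_pos ha hκ (mul_pos (by linarith [hε.1]) (by linarith)) hFk
    obtain ⟨hlo, hhi⟩ := hK k hKk
    exact ⟨div_le_div_of_nonneg_right (log_le_log hw hlo) hden.le,
      div_le_div_of_nonneg_right (log_le_log (hw.trans_le hlo) hhi) hden.le⟩

theorem stmt10 (a κ : ℝ) (ha : 0 < a) (hκ : 0 < κ)
    (f : ℝ → ℝ) (hf : Measurable f)
    (hf01 : ∀ r ∈ Set.Icc (0 : ℝ) a, f r ∈ Set.Icc (0 : ℝ) 1)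
    (c t₁ t₂ : ℝ) (hc : 0 < c) (ht₁ : 0 < t₁) (ht₁₂ : t₁ < t₂) (ht₂ : t₂ ≤ 1)
    (hlower : ∀ᵐ r ∂(volume : Measure ℝ), r ∈ Set.Icc t₁ t₂ → c ≤ f (a * r))
    (d : ℕ → ℝ) (hd : ∀ k : ℕ, 1 ≤ k → 0 < d k)
    (hsq : ∀ ε ∈ Set.Ioo (0 : ℝ) 1, ∃ K : ℕ, ∀ k : ℕ, K < k →
      wMinus a κ f ((1 + ε) * k) ≤ d k ∧ d k ≤ wPlus a κ f ((1 - ε) * k)) :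
    Tendsto (fun k : ℕ => Real.log (d k) / (k * Real.log k)) atTop (𝓝 (-2)) :=
  stmt10_general a κ ha hκ f hf hf01 c t₁ t₂ hc ht₁ ht₁₂ ht₂ hlower d hsq
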